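/- Assume X spans V with dim V = s. Every maximal nested set S of irreducible subsets of X has exactly s elements; moreover for A ∈ S with maximal proper subelements B_1,...,B_r ∈ S contained in A, the union C = B_1 ∪ ... ∪ B_r is complete and dim span(A) = dim span(C) + 1. -/

import Mathlib

/-- The span of the sublist `A ⊆ X`. -/
def spanOf (K : Type*) {V ι : Type*} [Field K] [AddCommGroup V] [Module K V]
    (X : ι → V) (A : Set ι) : Submodule K V :=
  Submodule.span K (X '' A)

/-- `A` is complete: `A = X ∩ span(A)`. -/
def IsCompleteSub (K : Type*) {V ι : Type*} [Field K] [AddCommGroup V] [Module K V]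
    (X : ι → V) (A : Set ι) : Prop :=
  A = {i | X i ∈ spanOf K X A}

/-- A decomposition `A = A₁ ∪ A₂` into nonempty parts with
`span(A) = span(A₁) ⊕ span(A₂)`. -/
def IsDecomp (K : Type*) {V ι : Type*} [Field K] [AddCommGroup V] [Module K V]
    (X : ι → V) (A A₁ A₂ : Set ι) : Prop :=
  A₁.Nonempty ∧ A₂.Nonempty ∧ Disjoint A₁ A₂ ∧ A₁ ∪ A₂ = A ∧
    Disjoint (spanOf K X A₁) (spanOf K X A₂) ∧
    spanOf K X A₁ ⊔ spanOf K X A₂ = spanOf K X A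

/-- `A` is irreducible: complete, nonempty, and with no nontrivial decomposition. -/
def IsIrred (K : Type*) {V ι : Type*} [Field K] [AddCommGroup V] [Module K V]
    (X : ι → V) (A : Set ι) : Prop :=
  IsCompleteSub K X A ∧ A.Nonempty ∧ ¬ ∃ A₁ A₂, IsDecomp K X A A₁ A₂

/-- `P` is the decomposition of `A` into irreducibles (as an unordered family):
all members are irreducible, their union is `A`, and their spans are independent
with supremum `span(A)`. -/
def IsIrredDecompFam (K : Type*) {V ι : Type*} [Field K] [AddCommGroup V] [Module K V]
    (X : ι → V) (P : Set (Set ι)) (A : Set ι) : Prop :=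
  (∀ B ∈ P, IsIrred K X B) ∧ ⋃₀ P = A ∧
  (∀ B ∈ P, Disjoint (spanOf K X B) (⨆ C ∈ P \ {B}, spanOf K X C)) ∧
  (⨆ B ∈ P, spanOf K X B) = spanOf K X A

/-- A family `S` of irreducibles is nested if for every subfamily `F` of pairwise
incomparable elements, `⋃₀ F` is complete and `F` is its decomposition into
irreducibles. -/
def IsNested (K : Type*) {V ι : Type*} [Field K] [AddCommGroup V] [Module K V]
    (X : ι → V) (S : Set (Set ι)) : Prop :=
  (∀ A ∈ S, IsIrred K X A) ∧
  ∀ F ⊆ S, (F.Pairwise fun A B => ¬ A ⊆ B ∧ ¬ B ⊆ A) →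
    IsCompleteSub K X (⋃₀ F) ∧ IsIrredDecompFam K X F (⋃₀ F)

/-!
For `A ∈ S` let `C` be the union of the children of `A` (the maximal members of `S` strictly
inside `A`). They form an antichain, so `C` is complete and they are its decomposition into
irreducibles; as `A` is irreducible, `C ≠ A`. For `x ∈ A` outside `span C`, the irreducible
component through `x` of the closure of `C ∪ {x}` can be added to `S` keeping it nested, so by
maximality it lies in `S`, which forces it to be `A`: hence `dim span A = dim span C + 1`. The
same argument with the whole index set in place of `A` shows that the maximal members of `S`
span `V`. Summing `dim span A = 1 + ∑ dim span B` over `A ∈ S` (the `B` ranging over the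
children of `A`), every non-maximal member of `S` is counted once as a child and the maximal ones
add up to `dim V`, so `|S| = dim V`.
-/

open Set Module

section SupIndep

variable {α L : Type*} [CompleteLattice L]

def Set.SupIndep (P : Set α) (f : α → L) : Prop :=
  ∀ a ∈ P, Disjoint (f a) (⨆ b ∈ P \ {a}, f b)

variable {P Q : Set α} {f : α → L}

theorem Set.SupIndep.subset (h : P.SupIndep f) (hQP : Q ⊆ P) : Q.SupIndep f :=
  fun a ha => (h a (hQP ha)).mono_right (biSup_mono fun _ hb => ⟨hQP hb.1, hb.2⟩)

theorem Set.supIndep_singleton (a : α) : ({a} : Set α).SupIndep f := by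
  simp [Set.SupIndep]

theorem Set.SupIndep.union [IsModularLattice L] (hP : P.SupIndep f) (hQ : Q.SupIndep f)
    (hPQ : Disjoint (⨆ a ∈ P, f a) (⨆ a ∈ Q, f a)) : (P ∪ Q).SupIndep f := by
  suffices key : ∀ {P Q : Set α}, P.SupIndep f → Disjoint (⨆ a ∈ P, f a) (⨆ a ∈ Q, f a) →
      ∀ a ∈ P, Disjoint (f a) (⨆ b ∈ (P ∪ Q) \ {a}, f b) by
    rintro a (ha | ha)
    · exact key hP hPQ a ha
    · rw [union_comm]; exact key hQ hPQ.symm a ha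
  intro P Q hP hPQ a ha
  have hle : (⨆ b ∈ (P ∪ Q) \ {a}, f b) ≤ (⨆ b ∈ P \ {a}, f b) ⊔ ⨆ b ∈ Q, f b := by
    refine iSup₂_le fun b ⟨hb, hba⟩ => hb.elim (fun hbP => ?_) fun hbQ => ?_
    · exact le_sup_of_le_left (le_biSup f ⟨hbP, hba⟩)
    · exact le_sup_of_le_right (le_biSup f hbQ)
  refine Disjoint.mono_right hle <|
    (hP a ha).disjoint_sup_right_of_disjoint_sup_left (hPQ.mono_left ?_)
  exact sup_le (le_biSup f ha) (biSup_mono fun _ hb => hb.1)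

theorem Set.SupIndep.finrank_iSup {K V : Type*} [DivisionRing K] [AddCommGroup V] [Module K V]
    [FiniteDimensional K V] {f : α → Submodule K V} (hP : P.Finite) (h : P.SupIndep f) :
    finrank K ↥(⨆ a ∈ P, f a) = ∑ᶠ a ∈ P, finrank K ↥(f a) := by
  induction P, hP using Set.Finite.induction_on with
  | empty => simp
  | @insert a P haP hP ih =>
    have hdisj : Disjoint (f a) (⨆ b ∈ P, f b) := by
      simpa [insert_sdiff_self_of_notMem haP] using h a (mem_insert a P)
    rw [iSup_insert, finsum_mem_insert _ haP hP, ← ih (h.subset (subset_insert a P)),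
      ← Submodule.finrank_sup_add_finrank_inf_eq, hdisj.eq_bot, finrank_bot, add_zero]

end SupIndep

section Span

variable {K V ι : Type*} [Field K] [AddCommGroup V] [Module K V] {X : ι → V} {A B : Set ι}

theorem spanOf_mono (h : A ⊆ B) : spanOf K X A ≤ spanOf K X B :=
  Submodule.span_mono (image_mono h)

theorem mem_spanOf {i : ι} (h : i ∈ A) : X i ∈ spanOf K X A :=
  Submodule.subset_span (mem_image_of_mem X h)

theorem spanOf_le_iff {W : Submodule K V} : spanOf K X A ≤ W ↔ ∀ i ∈ A, X i ∈ W := by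
  simp [spanOf, Submodule.span_le, subset_def]

theorem spanOf_union (A B : Set ι) : spanOf K X (A ∪ B) = spanOf K X A ⊔ spanOf K X B := by
  rw [spanOf, image_union, Submodule.span_union]; rfl

theorem spanOf_insert (i : ι) (A : Set ι) : spanOf K X (insert i A) = K ∙ X i ⊔ spanOf K X A := by
  rw [spanOf, image_insert_eq, Submodule.span_insert]; rfl

theorem spanOf_sUnion (P : Set (Set ι)) : spanOf K X (⋃₀ P) = ⨆ B ∈ P, spanOf K X B := by
  rw [spanOf, sUnion_eq_biUnion, image_iUnion₂, Submodule.span_iUnion₂]; rfl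

theorem spanOf_sUnion_diff_le (P : Set (Set ι)) (E : Set ι) :
    spanOf K X (⋃₀ P \ E) ≤ ⨆ C ∈ P \ {E}, spanOf K X C := by
  rw [spanOf_le_iff]
  rintro i ⟨⟨C, hCP, hiC⟩, hiE⟩
  have hC : C ∈ P \ {E} := ⟨hCP, fun hCE : C = E => hiE (hCE ▸ hiC)⟩
  exact le_biSup (spanOf K X) hC (mem_spanOf hiC)

theorem disjoint_of_disjoint_spanOf (hX0 : ∀ i, X i ≠ 0)
    (h : Disjoint (spanOf K X A) (spanOf K X B)) : Disjoint A B :=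
  disjoint_left.2 fun i hiA hiB =>
    hX0 i (Submodule.disjoint_def.1 h _ (mem_spanOf hiA) (mem_spanOf hiB))

def spanClosure (K : Type*) {V ι : Type*} [Field K] [AddCommGroup V] [Module K V]
    (X : ι → V) (A : Set ι) : Set ι :=
  {i | X i ∈ spanOf K X A}

theorem subset_spanClosure : A ⊆ spanClosure K X A := fun _ => mem_spanOf

theorem spanOf_spanClosure : spanOf K X (spanClosure K X A) = spanOf K X A :=
  le_antisymm (spanOf_le_iff.2 fun _ hi => hi) (spanOf_mono subset_spanClosure)

theorem isCompleteSub_spanClosure : IsCompleteSub K X (spanClosure K X A) := by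
  unfold IsCompleteSub; rw [spanOf_spanClosure]; rfl

theorem isCompleteSub_univ : IsCompleteSub K X (univ : Set ι) :=
  (eq_univ_of_forall fun _ => mem_spanOf (mem_univ _)).symm

theorem IsCompleteSub.mem_of_mem_spanOf (hA : IsCompleteSub K X A) {i : ι}
    (h : X i ∈ spanOf K X A) : i ∈ A := by
  rw [hA]; exact h

theorem IsCompleteSub.spanClosure_subset (hA : IsCompleteSub K X A) (hBA : B ⊆ A) :
    spanClosure K X B ⊆ A :=
  fun _ hi => hA.mem_of_mem_spanOf (spanOf_mono hBA hi)

theorem IsCompleteSub.of_union_of_disjoint (hX0 : ∀ i, X i ≠ 0) (hAB : IsCompleteSub K X (A ∪ B))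
    (h : Disjoint (spanOf K X A) (spanOf K X B)) : IsCompleteSub K X A := by
  refine Subset.antisymm subset_spanClosure fun i hi => ?_
  rcases hAB.mem_of_mem_spanOf (spanOf_mono subset_union_left hi) with hiA | hiB
  · exact hiA
  · exact absurd (Submodule.disjoint_def.1 h _ hi (mem_spanOf hiB)) (hX0 i)

theorem IsCompleteSub.union_of_disjoint {U : Set ι} {W : Submodule K V}
    (hB : IsCompleteSub K X B) (hBW : spanOf K X B ≤ W) (hWU : Disjoint W (spanOf K X U))
    (hsplit : ∀ i, X i ∈ spanOf K X (B ∪ U) → i ∈ U ∨ X i ∈ W) :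
    IsCompleteSub K X (B ∪ U) := by
  refine Subset.antisymm subset_spanClosure fun i hi => ?_
  refine (hsplit i hi).elim Or.inr fun hiW => Or.inl (hB.mem_of_mem_spanOf ?_)
  change X i ∈ spanOf K X (B ∪ U) at hi
  rw [spanOf_union] at hi
  have hmem : X i ∈ (spanOf K X B ⊔ spanOf K X U) ⊓ W := ⟨hi, hiW⟩
  -- modular law: `(span B ⊔ span U) ⊓ W = span B`
  rwa [sup_inf_assoc_of_le _ hBW, hWU.symm.eq_bot, sup_bot_eq] at hmem

end Span

section Decomposition

variable {K V ι : Type*} [Field K] [AddCommGroup V] [Module K V] {X : ι → V}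
  {A B D D₁ D₂ : Set ι} {P P₁ P₂ : Set (Set ι)}

theorem IsIrred.isIrredDecompFam_singleton (hA : IsIrred K X A) : IsIrredDecompFam K X {A} A :=
  ⟨by simpa using hA, sUnion_singleton A, supIndep_singleton A, iSup_singleton⟩

theorem IsIrredDecompFam.union (h₁ : IsIrredDecompFam K X P₁ D₁)
    (h₂ : IsIrredDecompFam K X P₂ D₂) (hD : Disjoint (spanOf K X D₁) (spanOf K X D₂)) :
    IsIrredDecompFam K X (P₁ ∪ P₂) (D₁ ∪ D₂) := by
  obtain ⟨hirr₁, hU₁, hind₁, hspan₁⟩ := h₁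
  obtain ⟨hirr₂, hU₂, hind₂, hspan₂⟩ := h₂
  refine ⟨fun B hB => hB.elim (hirr₁ B) (hirr₂ B), by rw [sUnion_union, hU₁, hU₂], ?_, ?_⟩
  · exact SupIndep.union hind₁ hind₂ (by rwa [hspan₁, hspan₂])
  · rw [iSup_union, hspan₁, hspan₂, spanOf_union]

theorem exists_isIrredDecompFam (hX0 : ∀ i, X i ≠ 0) (hfin : D.Finite)
    (hD : IsCompleteSub K X D) : ∃ P, IsIrredDecompFam K X P D := by
  induction hn : D.ncard using Nat.strong_induction_on generalizing D with
  | _ n ih =>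
  rcases D.eq_empty_or_nonempty with rfl | hne
  · exact ⟨∅, by simp [IsIrredDecompFam, spanOf]⟩
  by_cases hdec : ∃ D₁ D₂, IsDecomp K X D D₁ D₂
  · obtain ⟨D₁, D₂, hne₁, hne₂, hdisj, rfl, hspan, -⟩ := hdec
    have hcard := ncard_union_eq hdisj (hfin.subset subset_union_left)
      (hfin.subset subset_union_right)
    have hpos₁ := (ncard_pos (hfin.subset subset_union_left)).2 hne₁
    have hpos₂ := (ncard_pos (hfin.subset subset_union_right)).2 hne₂
    obtain ⟨P₁, hP₁⟩ := ih _ (by omega) (hfin.subset subset_union_left)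
      (hD.of_union_of_disjoint hX0 hspan) rfl
    obtain ⟨P₂, hP₂⟩ := ih _ (by omega) (hfin.subset subset_union_right)
      ((union_comm D₁ D₂ ▸ hD).of_union_of_disjoint hX0 hspan.symm) rfl
    exact ⟨P₁ ∪ P₂, hP₁.union hP₂ hspan⟩
  · exact ⟨{D}, IsIrred.isIrredDecompFam_singleton ⟨hD, hne, hdec⟩⟩

theorem IsIrredDecompFam.exists_superset_of_isIrred (hP : IsIrredDecompFam K X P D)
    (hB : IsIrred K X B) (hBD : B ⊆ D) : ∃ E ∈ P, B ⊆ E := by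
  obtain ⟨i, hi⟩ := hB.2.1
  obtain ⟨E, hEP, hiE⟩ : i ∈ ⋃₀ P := hP.2.1 ▸ hBD hi
  refine ⟨E, hEP, ?_⟩
  by_contra hBE
  have hdiff : spanOf K X (B \ E) ≤ ⨆ C ∈ P \ {E}, spanOf K X C :=
    (spanOf_mono (sdiff_subset_sdiff_left (hP.2.1 ▸ hBD))).trans (spanOf_sUnion_diff_le P E)
  refine hB.2.2 ⟨B ∩ E, B \ E, ⟨i, hi, hiE⟩, sdiff_nonempty.2 hBE, ?_, inter_union_sdiff B E,
    (hP.2.2.1 E hEP).mono (spanOf_mono inter_subset_right) hdiff, ?_⟩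
  · exact disjoint_sdiff_inter.symm
  · rw [← spanOf_union, inter_union_sdiff]

theorem IsIrredDecompFam.eq_singleton_of_isIrred (hX0 : ∀ i, X i ≠ 0)
    (hP : IsIrredDecompFam K X P A) (hA : IsIrred K X A) : P = {A} := by
  obtain ⟨hirr, hU, hind, -⟩ := hP
  obtain ⟨i, hi⟩ := hA.2.1
  obtain ⟨B, hB, -⟩ : i ∈ ⋃₀ P := hU ▸ hi
  have hrest : P \ {B} = ∅ := by
    by_contra hne
    obtain ⟨B', hB'P, hB'B⟩ := nonempty_iff_ne_empty.2 hne
    have hdisj : Disjoint (spanOf K X B) (spanOf K X (⋃₀ (P \ {B}))) := by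
      rw [spanOf_sUnion]; exact hind B hB
    have hunion : B ∪ ⋃₀ (P \ {B}) = A := by
      rw [← sUnion_insert, insert_sdiff_singleton, insert_eq_of_mem hB, hU]
    refine hA.2.2 ⟨B, ⋃₀ (P \ {B}), (hirr B hB).2.1, ?_,
      disjoint_of_disjoint_spanOf hX0 hdisj, hunion, hdisj, by rw [← spanOf_union, hunion]⟩
    obtain ⟨i, hi⟩ := (hirr B' hB'P).2.1
    exact ⟨i, B', ⟨hB'P, hB'B⟩, hi⟩
  have hPB : P = {B} := Subset.antisymm (sdiff_eq_empty.1 hrest) (singleton_subset_iff.2 hB)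
  rw [hPB, sUnion_singleton] at hU
  rw [hPB, hU]

end Decomposition

section Nested

variable {K V ι : Type*} [Field K] [AddCommGroup V] [Module K V] {X : ι → V}
  {S F : Set (Set ι)} {A B D E : Set ι} {P : Set (Set ι)}

theorem IsNested.of_isAntichain (hS : IsNested K X S) (hFS : F ⊆ S)
    (hF : IsAntichain (· ⊆ ·) F) :
    IsCompleteSub K X (⋃₀ F) ∧ IsIrredDecompFam K X F (⋃₀ F) :=
  hS.2 F hFS fun _ hA _ hB hne => ⟨hF hA hB hne, hF hB hA hne.symm⟩

theorem IsNested.subset_or_subset (hX0 : ∀ i, X i ≠ 0) (hS : IsNested K X S) (hA : A ∈ S)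
    (hB : B ∈ S) (hAB : (A ∩ B).Nonempty) : A ⊆ B ∨ B ⊆ A := by
  by_contra! h
  obtain ⟨i, hiA, hiB⟩ := hAB
  have hne : A ≠ B := by rintro rfl; exact h.1 subset_rfl
  obtain ⟨-, -, -, hind, -⟩ := hS.2 {A, B} (pair_subset hA hB)
    (pairwise_pair.2 fun _ => ⟨h, h.symm⟩)
  have hdisj := hind A (mem_insert A {B})
  rw [pair_sdiff_left hne, iSup_singleton] at hdisj
  exact hX0 i (Submodule.disjoint_def.1 hdisj _ (mem_spanOf hiA) (mem_spanOf hiB))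

/-- `A` could be added to `S` without violating nestedness, except possibly for the
irreducibility of `A`. -/
def IsCompatible (K : Type*) {V ι : Type*} [Field K] [AddCommGroup V] [Module K V]
    (X : ι → V) (S : Set (Set ι)) (A : Set ι) : Prop :=
  ∀ G ⊆ S, IsAntichain (· ⊆ ·) G → (∀ B ∈ G, ¬ B ⊆ A ∧ ¬ A ⊆ B) →
    Disjoint (spanOf K X A) (spanOf K X (⋃₀ G)) ∧ IsCompleteSub K X (A ∪ ⋃₀ G)

theorem isCompatible_univ (S : Set (Set ι)) : IsCompatible K X S univ := by
  intro G _ _ hG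
  obtain rfl : G = ∅ := eq_empty_of_forall_notMem fun B hB => (hG B hB).1 (subset_univ B)
  simpa [spanOf] using isCompleteSub_univ

theorem IsNested.isCompatible_of_mem (hS : IsNested K X S) (hA : A ∈ S) :
    IsCompatible K X S A := by
  intro G hGS hG hGA
  have hAG : A ∉ G := fun h => (hGA A h).1 subset_rfl
  obtain ⟨hcomp, -, -, hind, -⟩ := hS.of_isAntichain (insert_subset hA hGS)
    (hG.insert (fun B hB _ => (hGA B hB).1) fun B hB _ => (hGA B hB).2)
  refine ⟨?_, by rwa [sUnion_insert] at hcomp⟩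
  have hdisj := hind A (mem_insert A G)
  rwa [insert_sdiff_self_of_notMem hAG, ← spanOf_sUnion] at hdisj

theorem IsNested.insert_of_isCompatible (hS : IsNested K X S) (hE : IsIrred K X E)
    (hES : IsCompatible K X S E) : IsNested K X (insert E S) := by
  refine ⟨forall_mem_insert.2 ⟨hE, hS.1⟩, fun F hFS hpair => ?_⟩
  by_cases hEF : E ∈ F
  swap
  · exact hS.2 F ((subset_insert_iff_of_notMem hEF).1 hFS) hpair
  have hF : F = insert E (F \ {E}) := by rw [insert_sdiff_singleton, insert_eq_of_mem hEF]
  have hHS : F \ {E} ⊆ S := sdiff_singleton_subset_iff.2 hFS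
  have hF' : IsAntichain (· ⊆ ·) F := hpair.mono' fun _ _ h => h.1
  have hH : IsAntichain (· ⊆ ·) (F \ {E}) := hF'.subset sdiff_subset
  obtain ⟨hdisj, hcomp⟩ := hES _ hHS hH fun B hB => hpair hB.1 hEF hB.2
  rw [hF, sUnion_insert, insert_eq]
  exact ⟨hcomp, hE.isIrredDecompFam_singleton.union (hS.of_isAntichain hHS hH).2 hdisj⟩

/-- Members of an antichain avoiding `E` either lie in `D`, hence (being irreducible) in another
component of `D`, or are incomparable with `A`. -/
theorem IsCompatible.of_mem_isIrredDecompFam (hS : IsNested K X S) (hA : IsCompatible K X S A)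
    (hD : IsCompleteSub K X D) (hDA : D ⊆ A) (hSD : ∀ B ∈ S, B ⊂ A → B ⊆ D)
    (hP : IsIrredDecompFam K X P D) (hEP : E ∈ P) : IsCompatible K X S E := by
  intro H hHS hH hHE
  set W := ⨆ C ∈ P \ {E}, spanOf K X C
  set G₁ := {B ∈ H | ¬ B ⊆ D}
  set G₂ := {B ∈ H | B ⊆ D}
  have hED : E ⊆ D := hP.2.1 ▸ subset_sUnion_of_mem hEP
  have hEW : Disjoint (spanOf K X E) W := hP.2.2.1 E hEP
  have hsplit : ⋃₀ H = ⋃₀ G₁ ∪ ⋃₀ G₂ := by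
    rw [← sUnion_union]; congr 1; ext B; by_cases hB : B ⊆ D <;> simp [G₁, G₂, hB]
  have hG₁A : ∀ B ∈ G₁, ¬ B ⊆ A ∧ ¬ A ⊆ B := fun B hB =>
    have hAB : ¬ A ⊆ B := fun h => (hHE B hB.1).2 (hED.trans (hDA.trans h))
    ⟨fun h => hB.2 (hSD B (hHS hB.1) ⟨h, hAB⟩), hAB⟩
  obtain ⟨hAG₁, hcompG₁⟩ := hA G₁ (fun B hB => hHS hB.1) (hH.subset (sep_subset _ _)) hG₁A
  have hG₂D : ⋃₀ G₂ ⊆ D := sUnion_subset fun B hB => hB.2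
  have hG₂W : spanOf K X (⋃₀ G₂) ≤ W := by
    refine (spanOf_sUnion G₂).trans_le (iSup₂_le fun B hB => ?_)
    obtain ⟨E', hE'P, hBE'⟩ := hP.exists_superset_of_isIrred (hS.1 B (hHS hB.1)) hB.2
    have hE'E : E' ≠ E := by rintro rfl; exact (hHE B hB.1).1 hBE'
    exact (spanOf_mono hBE').trans (le_biSup (spanOf K X) ⟨hE'P, hE'E⟩)
  have hG₂E : IsCompleteSub K X (⋃₀ G₂ ∪ E) := by
    refine (hS.of_isAntichain (fun B hB => hHS hB.1) (hH.subset (sep_subset _ _))).1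
      |>.union_of_disjoint hG₂W hEW.symm fun i hi => ?_
    have hiD : i ∈ D := hD.mem_of_mem_spanOf (spanOf_mono (union_subset hG₂D hED) hi)
    by_cases hiE : i ∈ E
    · exact Or.inl hiE
    · exact Or.inr (spanOf_sUnion_diff_le P E (mem_spanOf ⟨hP.2.1 ▸ hiD, hiE⟩))
  have hG₂EA : spanOf K X (⋃₀ G₂ ∪ E) ≤ spanOf K X A :=
    spanOf_mono (union_subset hG₂D hED |>.trans hDA)
  refine ⟨?_, ?_⟩
  · rw [hsplit, spanOf_union, sup_comm]
    refine (hEW.mono_right hG₂W).disjoint_sup_right_of_disjoint_sup_left ?_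
    exact hAG₁.mono_left (by rw [← spanOf_union, union_comm]; exact hG₂EA)
  · have hcomp := hG₂E.union_of_disjoint hG₂EA hAG₁ fun i hi =>
      (hcompG₁.mem_of_mem_spanOf (spanOf_mono (union_subset_union_left _
        (union_subset hG₂D hED |>.trans hDA)) hi)).elim (fun hiA => Or.inr (mem_spanOf hiA)) Or.inl
    rwa [hsplit, union_comm (⋃₀ G₁), ← union_assoc, union_comm E]

end Nested

section Children

variable {ι : Type*} {S : Set (Set ι)} {A B : Set ι}

def children (S : Set (Set ι)) (A : Set ι) : Set (Set ι) :=
  {B | Maximal (fun B => B ∈ S ∧ B ⊂ A) B}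

theorem setOf_eq_children :
    {B | B ∈ S ∧ B ⊂ A ∧ ∀ B' ∈ S, B' ⊂ A → B ⊆ B' → B' = B} = children S A := by
  ext B
  simp only [children, maximal_iff, mem_ofPred_eq, and_imp, and_assoc]
  exact and_congr_right fun _ => and_congr_right fun _ =>
    forall₂_congr fun _ _ => forall₂_congr fun _ _ => eq_comm

theorem children_subset : children S A ⊆ S := fun _ hB => hB.1.1

theorem isAntichain_children : IsAntichain (· ⊆ ·) (children S A) :=
  setOfPred_maximal_antichain _

theorem sUnion_children_subset : ⋃₀ children S A ⊆ A :=
  sUnion_subset fun _ hB => hB.1.2.subset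

theorem subset_sUnion_children [Finite ι] (hB : B ∈ S) (hBA : B ⊂ A) :
    B ⊆ ⋃₀ children S A := by
  obtain ⟨M, hBM, hM⟩ := Finite.exists_le_maximal (p := fun B => B ∈ S ∧ B ⊂ A) ⟨hB, hBA⟩
  exact hBM.trans (subset_sUnion_of_mem hM)

theorem biUnion_children [Finite ι] :
    ⋃ A ∈ S, children S A = S \ {B | Maximal (· ∈ S) B} := by
  ext B
  simp only [mem_iUnion, mem_sdiff, mem_ofPred_eq, exists_prop]
  constructor
  · rintro ⟨A, hA, hB⟩
    exact ⟨hB.1.1, fun hmax => hB.1.2.ne (hmax.eq_of_le hA hB.1.2.subset)⟩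
  · rintro ⟨hB, hmax⟩
    obtain ⟨A₀, hBA₀, hA₀⟩ := (not_maximal_iff_exists_gt hB).1 hmax
    obtain ⟨A, hAA₀, hA⟩ := Finite.exists_le_minimal (p := fun A => A ∈ S ∧ B ⊂ A) ⟨hA₀, hBA₀⟩
    refine ⟨A, hA.1.1, ⟨hB, hA.1.2⟩, fun B' hB' hBB' => ?_⟩
    by_contra hB'B
    exact hB'.2.not_ge (hA.2 ⟨hB'.1, hBB'.lt_of_not_ge hB'B⟩ hB'.2.subset)

end Children

section Maximal

variable {K V ι : Type*} [Field K] [AddCommGroup V] [Module K V] {X : ι → V}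
  {S : Set (Set ι)} {A C : Set ι}

theorem IsNested.pairwiseDisjoint_children (hX0 : ∀ i, X i ≠ 0) (hS : IsNested K X S) :
    S.PairwiseDisjoint (children S) := by
  suffices h : ∀ ⦃A₁ A₂ B⦄, A₁ ∈ S → A₁ ⊂ A₂ → B ∈ children S A₁ → B ∉ children S A₂ by
    intro A₁ hA₁ A₂ hA₂ hne
    refine disjoint_left.2 fun B hB₁ hB₂ => ?_
    obtain ⟨i, hi⟩ := (hS.1 B hB₁.1.1).2.1
    rcases hS.subset_or_subset hX0 hA₁ hA₂ ⟨i, hB₁.1.2.subset hi, hB₂.1.2.subset hi⟩ with h₁₂ | h₂₁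
    · exact h hA₁ (h₁₂.ssubset_of_ne hne) hB₁ hB₂
    · exact h hA₂ (h₂₁.ssubset_of_ne hne.symm) hB₂ hB₁
  intro A₁ A₂ B hA₁ hA₁₂ hB₁ hB₂
  exact hB₁.1.2.not_ge (hB₂.2 ⟨hA₁, hA₁₂⟩ hB₁.1.2.subset)

theorem IsNested.mem_and_spanOf_le_of_maximal [Finite ι] (hX0 : ∀ i, X i ≠ 0)
    (hS : IsNested K X S) (hmax : ∀ S', IsNested K X S' → S ⊆ S' → S' = S)
    (hA : IsCompleteSub K X A) (hAS : IsCompatible K X S A) (hCA : C ⊆ A)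
    (hSC : ∀ B ∈ S, B ⊂ A → B ⊆ C) {x : ι} (hxA : x ∈ A) (hx : X x ∉ spanOf K X C) :
    A ∈ S ∧ spanOf K X A ≤ spanOf K X (insert x C) := by
  set D := spanClosure K X (insert x C)
  have hDA : D ⊆ A := hA.spanClosure_subset (insert_subset hxA hCA)
  have hCD : insert x C ⊆ D := subset_spanClosure
  obtain ⟨P, hP⟩ := exists_isIrredDecompFam hX0 (toFinite D) isCompleteSub_spanClosure
  obtain ⟨E, hEP, hxE⟩ : x ∈ ⋃₀ P := hP.2.1 ▸ hCD (mem_insert x C)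
  have hED : E ⊆ D := hP.2.1 ▸ subset_sUnion_of_mem hEP
  have hES : E ∈ S := by
    have hE := hAS.of_mem_isIrredDecompFam hS isCompleteSub_spanClosure hDA
      (fun B hB hBA => (hSC B hB hBA).trans ((subset_insert x C).trans hCD)) hP hEP
    rw [← hmax _ (hS.insert_of_isCompatible (hP.1 E hEP) hE) (subset_insert E S)]
    exact mem_insert E S
  obtain rfl : E = A := by
    by_contra hne
    exact hx (spanOf_mono (hSC E hES ((hED.trans hDA).ssubset_of_ne hne)) (mem_spanOf hxE))
  exact ⟨hES, (spanOf_mono hED).trans spanOf_spanClosure.le⟩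

theorem IsNested.spanOf_sUnion_maximal_eq_top [Finite ι] (hX0 : ∀ i, X i ≠ 0)
    (hspan : Submodule.span K (range X) = ⊤) (hS : IsNested K X S)
    (hmax : ∀ S', IsNested K X S' → S ⊆ S' → S' = S) :
    spanOf K X (⋃₀ {B | Maximal (· ∈ S) B}) = ⊤ := by
  have hSC : ∀ B ∈ S, B ⊆ ⋃₀ {B | Maximal (· ∈ S) B} := fun B hB => by
    obtain ⟨M, hBM, hM⟩ := Finite.exists_le_maximal (p := (· ∈ S)) hB
    exact hBM.trans (subset_sUnion_of_mem hM)
  by_contra hne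
  obtain ⟨x, hx⟩ : ∃ x, X x ∉ spanOf K X (⋃₀ {B | Maximal (· ∈ S) B}) := by
    by_contra! h
    exact hne (eq_top_iff.2 (hspan ▸ Submodule.span_le.2 (range_subset_iff.2 h)))
  obtain ⟨huniv, -⟩ := hS.mem_and_spanOf_le_of_maximal hX0 hmax isCompleteSub_univ
    (isCompatible_univ S) (subset_univ _) (fun B hB _ => hSC B hB) (mem_univ x) hx
  exact hx (mem_spanOf (hSC univ huniv (mem_univ x)))

variable [FiniteDimensional K V] [Finite ι]

theorem IsNested.finrank_spanOf_eq_add_one (hX0 : ∀ i, X i ≠ 0) (hS : IsNested K X S)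
    (hmax : ∀ S', IsNested K X S' → S ⊆ S' → S' = S) (hA : A ∈ S) :
    finrank K ↥(spanOf K X A) = finrank K ↥(spanOf K X (⋃₀ children S A)) + 1 := by
  obtain ⟨hcomp, hfam⟩ := hS.of_isAntichain (children_subset (A := A)) isAntichain_children
  obtain ⟨x, hxA, hx⟩ : ∃ x ∈ A, X x ∉ spanOf K X (⋃₀ children S A) := by
    by_contra! h
    have hAch : A ∈ children S A := by
      rw [Subset.antisymm sUnion_children_subset fun i hi => hcomp.mem_of_mem_spanOf (h i hi)]
        at hfam
      exact hfam.eq_singleton_of_isIrred hX0 (hS.1 A hA) ▸ mem_singleton A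
    exact hAch.1.2.ne rfl
  obtain ⟨-, hle⟩ := hS.mem_and_spanOf_le_of_maximal hX0 hmax (hS.1 A hA).1
    (hS.isCompatible_of_mem hA) sUnion_children_subset
    (fun _ hB hBA => subset_sUnion_children hB hBA) hxA hx
  have hlt := Submodule.finrank_lt_finrank_of_lt <|
    (spanOf_mono (K := K) (X := X) sUnion_children_subset).lt_of_not_ge
      fun h => hx (h (mem_spanOf hxA))
  rw [spanOf_insert] at hle
  have hup := (Submodule.finrank_mono hle).trans
    (Submodule.finrank_add_le_finrank_add_finrank (K ∙ X x) (spanOf K X (⋃₀ children S A)))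
  rw [finrank_span_singleton (hX0 x)] at hup
  omega

end Maximal

theorem IsNested.ncard_eq_finrank {K V ι : Type*} [Field K] [AddCommGroup V] [Module K V]
    [FiniteDimensional K V] [Finite ι] {X : ι → V} {S : Set (Set ι)} (hX0 : ∀ i, X i ≠ 0)
    (hspan : Submodule.span K (range X) = ⊤) (hS : IsNested K X S)
    (hmax : ∀ S', IsNested K X S' → S ⊆ S' → S' = S) :
    S.ncard = finrank K V := by
  set d : Set ι → ℕ := fun B => finrank K ↥(spanOf K X B)
  set R := {B | Maximal (· ∈ S) B}
  have hA : ∀ A ∈ S, d A = ∑ᶠ B ∈ children S A, d B + 1 := fun A hA => by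
    have hind := (hS.of_isAntichain (F := children S A) children_subset
      isAntichain_children).2.2.2.1
    simp only [d]
    rw [hS.finrank_spanOf_eq_add_one hX0 hmax hA, spanOf_sUnion,
      SupIndep.finrank_iSup (toFinite _) hind]
  have hR : ∑ᶠ B ∈ R, d B = finrank K V := by
    have hind := (hS.of_isAntichain (F := R) (fun B hB => hB.1)
      (setOfPred_maximal_antichain _)).2.2.2.1
    rw [← SupIndep.finrank_iSup (toFinite R) hind, ← spanOf_sUnion,
      hS.spanOf_sUnion_maximal_eq_top hX0 hspan hmax, finrank_top]
  have hsplit : ∑ᶠ B ∈ S, d B = ∑ᶠ B ∈ R, d B + ∑ᶠ A ∈ S, ∑ᶠ B ∈ children S A, d B := by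
    rw [← finsum_mem_biUnion (hS.pairwiseDisjoint_children hX0) (toFinite S)
      (fun _ _ => toFinite _), biUnion_children, ← finsum_mem_union disjoint_sdiff_right
      (toFinite _) (toFinite _), union_sdiff_cancel fun B hB => hB.1]
  rw [finsum_mem_congr rfl hA, finsum_mem_add_distrib (toFinite S), finsum_one] at hsplit
  omega

/-- a maximal nested set `S` has exactly `s = dim V` elements; moreover
for `A ∈ S`, the union `C` of the maximal elements of `S` properly contained in `A`
is complete and `dim span(A) = dim span(C) + 1`. -/
theorem maximal_nested_set
    {K V ι : Type*} [Field K] [AddCommGroup V] [Module K V] [FiniteDimensional K V]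
    [Fintype ι] (X : ι → V) (hX0 : ∀ i, X i ≠ 0)
    (hspan : Submodule.span K (Set.range X) = ⊤)
    (S : Set (Set ι)) (hS : IsNested K X S)
    (hmax : ∀ S', IsNested K X S' → S ⊆ S' → S' = S) :
    S.ncard = Module.finrank K V ∧
    ∀ A ∈ S,
      IsCompleteSub K X
        (⋃₀ {B | B ∈ S ∧ B ⊂ A ∧ ∀ B' ∈ S, B' ⊂ A → B ⊆ B' → B' = B}) ∧
      Module.finrank K ↥(spanOf K X A) =
        Module.finrank K
          ↥(spanOf K X
            (⋃₀ {B | B ∈ S ∧ B ⊂ A ∧ ∀ B' ∈ S, B' ⊂ A → B ⊆ B' → B' = B})) + 1 := by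
  refine ⟨hS.ncard_eq_finrank hX0 hspan hmax, fun A hA => ?_⟩
  rw [setOf_eq_children]
  exact ⟨(hS.of_isAntichain children_subset isAntichain_children).1,
    hS.finrank_spanOf_eq_add_one hX0 hmax hA⟩
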